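/- (Property P1) Let W be a (λ_S+1) class, let s ∈ S ∩ W and u ∈ W, and let C1 ≠ C2 be nearest (λ_S+1) cuts of u containing s. If some Steiner vertex t satisfies t ∉ C1 ∪ C2, then no vertex of W lies outside C1 ∪ C2, i.e., W ⊆ C1 ∪ C2. -/
import Mathlib


open Finset

namespace Paper

variable {α : Type*} [Fintype α] [DecidableEq α]

/-- Capacity of a cut `A` in an undirected multigraph with edge multiplicities `w`. -/
def cutCap (w : α → α → ℕ) (A : Finset α) : ℕ := ∑ u ∈ A, ∑ v ∈ Aᶜ, w u v

/-- `C` is a Steiner cut for the Steiner set `S`. -/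
def IsSteinerCut (S C : Finset α) : Prop := (C ∩ S).Nonempty ∧ (S \ C).Nonempty

/-- `C` is an `S`-mincut: a Steiner cut of capacity `lam = λ_S`. -/
def IsSMincut (w : α → α → ℕ) (S : Finset α) (lam : ℕ) (C : Finset α) : Prop :=
  IsSteinerCut S C ∧ cutCap w C = lam

/-- `C` is a `(λ_S+1)` cut: a Steiner cut of capacity `lam + 1`. -/
def IsPlusOneCut (w : α → α → ℕ) (S : Finset α) (lam : ℕ) (C : Finset α) : Prop :=
  IsSteinerCut S C ∧ cutCap w C = lam + 1

/-- A cut `C` separates `u` and `v`: exactly one of them lies in `C`. -/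
def Separates (C : Finset α) (u v : α) : Prop := (u ∈ C ∧ v ∉ C) ∨ (v ∈ C ∧ u ∉ C)

/-- `W` is a `(λ_S+1)` class: an equivalence class of the relation relating `u,v`
iff no `S`-mincut separates them. -/
def IsClass (w : α → α → ℕ) (S : Finset α) (lam : ℕ) (W : Finset α) : Prop :=
  ∃ u0 : α, ∀ v : α, v ∈ W ↔ ∀ C : Finset α, IsSMincut w S lam C → ¬ Separates C u0 v

/-- `C` is a nearest `(λ_S+1)` cut of `u` containing the Steiner vertex `s`. -/
def IsNearestPlusOneCut (w : α → α → ℕ) (S : Finset α) (lam : ℕ) (s u : α)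
    (C : Finset α) : Prop :=
  IsPlusOneCut w S lam C ∧ s ∈ C ∧ u ∈ C ∧
    ∀ C' : Finset α, IsPlusOneCut w S lam C' → s ∈ C' → u ∈ C' → ¬ C' ⊂ C

/-- A cut `C` subdivides a set `X`. -/
def Subdivides (C X : Finset α) : Prop := (X ∩ C).Nonempty ∧ (X \ C).Nonempty

lemma cutCap_eq (w : α → α → ℕ) (A : Finset α) :
    cutCap w A = ∑ u : α, ∑ v : α,
      (if u ∈ A then 1 else 0) * (if v ∈ A then 0 else 1) * w u v := by
  unfold cutCap
  rw [← Finset.sum_subset (Finset.subset_univ A)]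
  · refine Finset.sum_congr rfl fun u hu => ?_
    by_cases hA : u ∈ A
    · simp only [hA, if_true, one_mul]
      rw [← Finset.sum_subset (Finset.subset_univ Aᶜ)]
      · refine Finset.sum_congr rfl fun v hv => ?_
        have : v ∉ A := by simpa using hv
        simp [this]
      · intro v _ hv
        have : v ∈ A := by simpa using hv
        simp [this]
    · exact absurd hu hA
  · intro u _ hu
    simp [hu]

lemma cutCap_submod (w : α → α → ℕ) (A B : Finset α) :
    cutCap w (A ∩ B) + cutCap w (A ∪ B) ≤ cutCap w A + cutCap w B := by
  simp only [cutCap_eq]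
  rw [← Finset.sum_add_distrib, ← Finset.sum_add_distrib]
  refine Finset.sum_le_sum fun u _ => ?_
  rw [← Finset.sum_add_distrib, ← Finset.sum_add_distrib]
  refine Finset.sum_le_sum fun v _ => ?_
  by_cases ha : u ∈ A <;> by_cases hb : u ∈ B <;> by_cases hc : v ∈ A <;> by_cases hd : v ∈ B <;>
    simp [ha, hb, hc, hd, Finset.mem_inter, Finset.mem_union]

lemma class_not_sep {w : α → α → ℕ} {S : Finset α} {lam : ℕ} {W : Finset α}
    (hW : IsClass w S lam W) {a b : α} (ha : a ∈ W) (hb : b ∈ W)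
    {C : Finset α} (hC : IsSMincut w S lam C) : ¬ Separates C a b := by
  obtain ⟨u0, h⟩ := hW
  intro hsep
  rcases hsep with ⟨haC, hbC⟩ | ⟨hbC, haC⟩
  · by_cases hu : u0 ∈ C
    · exact (h b).mp hb C hC (Or.inl ⟨hu, hbC⟩)
    · exact (h a).mp ha C hC (Or.inr ⟨haC, hu⟩)
  · by_cases hu : u0 ∈ C
    · exact (h a).mp ha C hC (Or.inl ⟨hu, haC⟩)
    · exact (h b).mp hb C hC (Or.inr ⟨hbC, hu⟩)

/-- Property P1. -/
theorem property_P1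
    (w : α → α → ℕ) (hsym : ∀ u v, w u v = w v u) (hdiag : ∀ u, w u u = 0)
    (S : Finset α) (hScard : 2 ≤ S.card) (lam : ℕ)
    (hlam_ex : ∃ C : Finset α, IsSteinerCut S C ∧ cutCap w C = lam)
    (hlam_min : ∀ C : Finset α, IsSteinerCut S C → lam ≤ cutCap w C)
    (W : Finset α) (hW : IsClass w S lam W)
    (s : α) (hsS : s ∈ S) (hsW : s ∈ W) (u : α) (huW : u ∈ W)
    (C1 C2 : Finset α) (hne : C1 ≠ C2)
    (hC1 : IsNearestPlusOneCut w S lam s u C1)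
    (hC2 : IsNearestPlusOneCut w S lam s u C2)
    (t : α) (htS : t ∈ S) (ht : t ∉ C1 ∪ C2) :
    W ⊆ C1 ∪ C2 := by
  intro x hxW
  by_contra hx
  obtain ⟨⟨hsc1, hcap1⟩, hsC1, huC1, hnear1⟩ := hC1
  obtain ⟨⟨hsc2, hcap2⟩, hsC2, huC2, hnear2⟩ := hC2
  have htC1 : t ∉ C1 := fun h => ht (Finset.mem_union_left _ h)
  have htC2 : t ∉ C2 := fun h => ht (Finset.mem_union_right _ h)
  have hxC1 : x ∉ C1 := fun h => hx (Finset.mem_union_left _ h)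
  have hxC2 : x ∉ C2 := fun h => hx (Finset.mem_union_right _ h)
  have hsInt : s ∈ C1 ∩ C2 := Finset.mem_inter.mpr ⟨hsC1, hsC2⟩
  have huInt : u ∈ C1 ∩ C2 := Finset.mem_inter.mpr ⟨huC1, huC2⟩
  have htInt : t ∉ C1 ∩ C2 := fun h => htC1 (Finset.mem_inter.mp h).1
  have hsUn : s ∈ C1 ∪ C2 := Finset.mem_union_left _ hsC1
  have hSCint : IsSteinerCut S (C1 ∩ C2) :=
    ⟨⟨s, Finset.mem_inter.mpr ⟨hsInt, hsS⟩⟩, ⟨t, Finset.mem_sdiff.mpr ⟨htS, htInt⟩⟩⟩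
  have hSCun : IsSteinerCut S (C1 ∪ C2) :=
    ⟨⟨s, Finset.mem_inter.mpr ⟨hsUn, hsS⟩⟩, ⟨t, Finset.mem_sdiff.mpr ⟨htS, ht⟩⟩⟩
  have h1 : lam ≤ cutCap w (C1 ∩ C2) := hlam_min _ hSCint
  have h2 : lam ≤ cutCap w (C1 ∪ C2) := hlam_min _ hSCun
  have hsub := cutCap_submod w C1 C2
  rw [hcap1, hcap2] at hsub
  have hcases : cutCap w (C1 ∩ C2) = lam ∨ cutCap w (C1 ∩ C2) = lam + 1 ∨
      cutCap w (C1 ∪ C2) = lam := by omega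
  rcases hcases with hcase | hcase | hcase
  · exact class_not_sep hW hsW hxW ⟨hSCint, hcase⟩ (Or.inl ⟨hsInt, fun h => hxC1 (Finset.mem_inter.mp h).1⟩)
  · by_cases hsub12 : C1 ⊆ C2
    · exact hnear2 C1 ⟨hsc1, hcap1⟩ hsC1 huC1 (Finset.ssubset_iff_subset_ne.mpr ⟨hsub12, hne⟩)
    · have hIntNe : C1 ∩ C2 ≠ C1 := by
        intro h
        exact hsub12 (fun a ha => by
          rw [← h] at ha
          exact (Finset.mem_inter.mp ha).2)
      exact hnear1 (C1 ∩ C2) ⟨hSCint, hcase⟩ hsInt huInt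
        (Finset.ssubset_iff_subset_ne.mpr ⟨Finset.inter_subset_left, hIntNe⟩)
  · exact class_not_sep hW hsW hxW ⟨hSCun, hcase⟩ (Or.inl ⟨hsUn, hx⟩)

end Paper
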